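/- arXiv:0708.0315 — 7 statements merged into one kernel-verified Lean document; each statement's English description precedes it below -/
import Mathlib

section
/- The 2×2 matrix A(η) with entries A₁₁ = (τ-μ)η₁² + μ, A₁₂ = A₂₁ = (λ+μ)η₁η₂, A₂₂ = (τ-μ)η₂² + μ is positive definite for all unit vectors η ∈ ℝ² if and only if μ > 0, τ > 0, and (τ-λ)(τ+λ+2μ) > 0. -/
/-!
On the unit circle `A₁₁ = τ η₁² + μ η₂²` and
`det A = τ μ (η₁² - η₂²)² + η₁² η₂² (τ - λ)(τ + λ + 2μ)`.
Necessity: `η = (1, 0)` gives `τ > 0` and `τ μ > 0`, and `η = (1, 1)/√2` gives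
`(τ - λ)(τ + λ + 2μ) > 0`. Sufficiency: `(η₁² - η₂²)²` and `η₁² η₂²` never vanish together,
since `(η₁² - η₂²)² + 4 η₁² η₂² = 1`.
-/

open Matrix

section FinTwo

variable {R : Type*} [CommRing R] [StarRing R] [TrivialStar R]

lemma Matrix.isHermitian_of_fin_two (a b c : R) : (!![a, c; c, b]).IsHermitian := by
  ext i j; fin_cases i <;> fin_cases j <;> simp

lemma Matrix.star_dotProduct_mulVec_fin_two (a b c : R) (x : Fin 2 → R) :
    star x ⬝ᵥ (!![a, c; c, b] *ᵥ x) = a * x 0 ^ 2 + 2 * c * x 0 * x 1 + b * x 1 ^ 2 := by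
  simp only [star_trivial, dotProduct, mulVec, Fin.sum_univ_two, of_apply, cons_val',
    cons_val_zero, cons_val_one, empty_val', cons_val_fin_one]
  ring

theorem Matrix.posDef_fin_two_iff [LinearOrder R] [IsStrictOrderedRing R] {a b c : R} :
    (!![a, c; c, b]).PosDef ↔ 0 < a ∧ 0 < a * b - c ^ 2 := by
  simp only [posDef_iff_dotProduct_mulVec, isHermitian_of_fin_two, true_and,
    star_dotProduct_mulVec_fin_two]
  constructor
  · intro h
    have ha : 0 < a := by simpa using h (x := ![1, 0]) (by simp)
    -- the form at `(-c, a)` is `a * (a * b - c ^ 2)`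
    have hx : ![-c, a] ≠ 0 := fun h0 => ha.ne' (by simpa using congrFun h0 1)
    have hQ := h hx
    simp only [cons_val_zero, cons_val_one, cons_val_fin_one] at hQ
    refine ⟨ha, pos_of_mul_pos_right (b := a * b - c ^ 2) ?_ ha.le⟩
    linear_combination hQ
  · rintro ⟨ha, hdet⟩ x hx
    have hsq : a * (a * x 0 ^ 2 + 2 * c * x 0 * x 1 + b * x 1 ^ 2)
        = (a * x 0 + c * x 1) ^ 2 + (a * b - c ^ 2) * x 1 ^ 2 := by ring
    refine pos_of_mul_pos_right (hsq ▸ ?_) ha.le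
    rcases eq_or_ne (x 1) 0 with h1 | h1
    · have h0 : x 0 ≠ 0 := fun h0 => hx (by ext i; fin_cases i <;> simp [h0, h1])
      rw [h1, mul_zero, add_zero, zero_pow two_ne_zero, mul_zero, add_zero]
      positivity
    · positivity

end FinTwo

lemma mul_sq_add_mul_sq_pos {p q x y : ℝ} (hp : 0 < p) (hq : 0 < q) (h : x ^ 2 + y ^ 2 = 1) :
    0 < p * x ^ 2 + q * y ^ 2 := by
  rcases eq_or_ne x 0 with rfl | hx
  · rw [zero_pow two_ne_zero, zero_add] at h
    simpa [h] using hq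
  · positivity

lemma mul_sq_sub_sq_sq_add_pos {p q x y : ℝ} (hp : 0 < p) (hq : 0 < q) (h : x ^ 2 + y ^ 2 = 1) :
    0 < p * (x ^ 2 - y ^ 2) ^ 2 + x ^ 2 * y ^ 2 * q := by
  have hsum : (x ^ 2 - y ^ 2) ^ 2 + 4 * (x ^ 2 * y ^ 2) = 1 := by
    linear_combination (x ^ 2 + y ^ 2 + 1) * h
  rcases eq_or_ne (x * y) 0 with hxy | hxy
  · have hxy2 : x ^ 2 * y ^ 2 = 0 := by rw [← mul_pow, hxy, zero_pow two_ne_zero]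
    rw [hxy2, mul_zero, add_zero] at hsum
    rw [hxy2, zero_mul, add_zero, hsum, mul_one]
    exact hp
  · have : x ≠ 0 := left_ne_zero_of_mul hxy
    have : y ≠ 0 := right_ne_zero_of_mul hxy
    positivity

lemma cubic_posDef_iff {lam mu tau x y : ℝ} (h : x ^ 2 + y ^ 2 = 1) :
    (!![(tau - mu) * x ^ 2 + mu, (lam + mu) * x * y;
        (lam + mu) * x * y, (tau - mu) * y ^ 2 + mu] : Matrix (Fin 2) (Fin 2) ℝ).PosDef ↔
      0 < tau * x ^ 2 + mu * y ^ 2 ∧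
        0 < tau * mu * (x ^ 2 - y ^ 2) ^ 2 +
          x ^ 2 * y ^ 2 * ((tau - lam) * (tau + lam + 2 * mu)) := by
  rw [posDef_fin_two_iff]
  congr! 2
  · linear_combination (-mu) * h
  · linear_combination (-(mu * (tau * (x ^ 2 + y ^ 2) + mu))) * h

theorem cubic_posdef (lam mu tau : ℝ) :
    (∀ eta1 eta2 : ℝ, eta1^2 + eta2^2 = 1 →
      (!![(tau-mu)*eta1^2 + mu, (lam+mu)*eta1*eta2;
          (lam+mu)*eta1*eta2, (tau-mu)*eta2^2 + mu] : Matrix (Fin 2) (Fin 2) ℝ).PosDef)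
    ↔ (mu > 0 ∧ tau > 0 ∧ (tau - lam) * (tau + lam + 2*mu) > 0) := by
  constructor
  · intro h
    obtain ⟨htau, htaumu⟩ := (cubic_posDef_iff (by norm_num)).1 (h 1 0 (by norm_num))
    norm_num at htau htaumu
    have hs : (√2 / 2) ^ 2 = 1 / 2 := by rw [div_pow, Real.sq_sqrt zero_le_two]; norm_num
    have hs' : (√2 / 2) ^ 2 + (√2 / 2) ^ 2 = 1 := by rw [hs]; norm_num
    have hD := ((cubic_posDef_iff hs').1 (h _ _ hs')).2
    rw [hs] at hD
    exact ⟨pos_of_mul_pos_right htaumu htau.le, htau, by linarith⟩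
  · rintro ⟨hmu, htau, hD⟩ eta1 eta2 heta
    rw [cubic_posDef_iff heta]
    exact ⟨mul_sq_add_mul_sq_pos htau hmu heta,
      mul_sq_sub_sq_sq_add_pos (mul_pos htau hmu) hD heta⟩
end

section
/- For a cubic medium, the matrix A(η) has a repeated eigenvalue for some unit vector η if and only if (λ+μ)(τ-μ) = 0. -/
open Matrix

/-! A(η) is a multiple of the identity iff (λ+μ)η₁η₂ = 0 and (τ-μ)(η₁² - η₂²) = 0. On the unit
circle η₁η₂ and η₁² - η₂² never vanish together, so one of the two factors λ+μ, τ-μ must be zero;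
conversely η = (1/√2, 1/√2) works when λ+μ = 0 and η = (1, 0) when τ = μ. -/

theorem Matrix.exists_eq_smul_one_fin_two_iff {R : Type*} [Semiring R] (a b c d : R) :
    (∃ k : R, !![a, b; c, d] = k • (1 : Matrix (Fin 2) (Fin 2) R)) ↔ b = 0 ∧ c = 0 ∧ a = d := by
  simp [one_fin_two, smul_of]
  tauto

theorem eq_zero_of_mul_eq_zero_of_sq_eq_sq {M : Type*} [MonoidWithZero M] [NoZeroDivisors M]
    {a b : M} (hab : a * b = 0) (h : a ^ 2 = b ^ 2) : a = 0 := by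
  rcases mul_eq_zero.1 hab with ha | hb
  · exact ha
  · rw [hb, zero_pow two_ne_zero] at h
    exact pow_eq_zero_iff two_ne_zero |>.1 h

theorem cubic_repeated_eigenvalue (lam mu tau : ℝ) :
    (∃ eta1 eta2 : ℝ, eta1^2 + eta2^2 = 1 ∧ ∃ c : ℝ,
      (!![(tau-mu)*eta1^2 + mu, (lam+mu)*eta1*eta2;
          (lam+mu)*eta1*eta2, (tau-mu)*eta2^2 + mu] : Matrix (Fin 2) (Fin 2) ℝ)
        = c • (1 : Matrix (Fin 2) (Fin 2) ℝ))
    ↔ (lam + mu) * (tau - mu) = 0 := by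
  simp only [exists_eq_smul_one_fin_two_iff, and_self_left, add_left_inj]
  constructor
  · rintro ⟨e1, e2, hunit, hoff, hdiag⟩
    by_contra! h
    obtain ⟨hshear, htau⟩ := mul_ne_zero_iff.1 h
    have he : e1 * e2 = 0 := by simpa [mul_assoc, hshear] using hoff
    have hsq : e1 ^ 2 = e2 ^ 2 := mul_left_cancel₀ htau hdiag
    have h1 : e1 = 0 := eq_zero_of_mul_eq_zero_of_sq_eq_sq he hsq
    have h2 : e2 = 0 := eq_zero_of_mul_eq_zero_of_sq_eq_sq (by rw [mul_comm, he]) hsq.symm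
    simp [h1, h2] at hunit
  · intro h
    rcases mul_eq_zero.1 h with hshear | htau
    · refine ⟨√2 / 2, √2 / 2, ?_, by simp [hshear], rfl⟩
      have : √2 ^ 2 = 2 := Real.sq_sqrt zero_le_two
      linear_combination this / 2
    · refine ⟨1, 0, by norm_num, by simp, by simp [htau]⟩
end

section
/- For a cubic medium with τ ≠ λ+2μ, the unit direction η = (cos φ, sin φ) satisfies η^⊥ · A(η) η = 0 if and only if sin(4φ) = 0, i.e. φ = kπ/4 for some integer k; in particular there are exactly eight hyperbolic directions on the unit circle. -/
/-! The quadratic form `η^⊥ · A(η) η` is the polynomial `(λ + 2μ - τ) c s (c² - s²)` in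
`c = cos φ`, `s = sin φ`, and `4 c s (c² - s²) = 2 sin 2φ cos 2φ = sin 4φ`. So for `τ ≠ λ + 2μ` the
hyperbolic directions are the zeros of `sin 4φ`, namely the multiples of `π / 4`, eight of which lie
in `[0, 2π)`. -/

open Matrix Real

def cubicMediumMatrix (lam mu tau c s : ℝ) : Matrix (Fin 2) (Fin 2) ℝ :=
  !![(tau - mu) * c ^ 2 + mu, (lam + mu) * c * s;
     (lam + mu) * c * s, (tau - mu) * s ^ 2 + mu]

theorem perp_dotProduct_cubicMediumMatrix_mulVec (lam mu tau c s : ℝ) :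
    ![-s, c] ⬝ᵥ cubicMediumMatrix lam mu tau c s *ᵥ ![c, s] =
      (lam + 2 * mu - tau) * (c * s * (c ^ 2 - s ^ 2)) := by
  simp only [cubicMediumMatrix, mulVec, dotProduct, Fin.sum_univ_two, of_apply, cons_val',
    cons_val_zero, cons_val_one, empty_val', cons_val_fin_one]
  ring

theorem Real.sin_four_mul (x : ℝ) : sin (4 * x) = 4 * (cos x * sin x * (cos x ^ 2 - sin x ^ 2)) := by
  rw [show 4 * x = 2 * (2 * x) by ring, sin_two_mul, sin_two_mul, cos_two_mul']
  ring

theorem Real.sin_mul_eq_zero_iff {a : ℝ} (ha : a ≠ 0) (x : ℝ) :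
    sin (a * x) = 0 ↔ ∃ k : ℤ, x = k * π / a := by
  simp only [sin_eq_zero_iff, eq_div_iff ha, eq_comm (b := a * x), mul_comm x]

theorem Real.setOf_sin_nat_mul_eq_zero_Ico {n : ℕ} (hn : 0 < n) :
    {x : ℝ | x ∈ Set.Ico 0 (2 * π) ∧ sin (n * x) = 0} =
      (Finset.range (2 * n)).image (fun k : ℕ => k * π / n) := by
  have hn' : (0 : ℝ) < n := Nat.cast_pos.mpr hn
  ext x
  simp only [Set.mem_ofPred_eq, Set.mem_Ico, sin_mul_eq_zero_iff hn'.ne', Finset.coe_image,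
    Set.mem_image, Finset.mem_coe, Finset.mem_range]
  constructor
  · rintro ⟨⟨hx0, hx2π⟩, k, rfl⟩
    have hk0 : (0 : ℝ) ≤ k := by
      by_contra! h
      have : (k : ℝ) * π / n < 0 := div_neg_of_neg_of_pos (mul_neg_of_neg_of_pos h pi_pos) hn'
      linarith
    have hk : (k : ℝ) < 2 * n := by
      rw [div_lt_iff₀ hn', mul_right_comm] at hx2π
      exact lt_of_mul_lt_mul_right hx2π pi_pos.le
    lift k to ℕ using Int.cast_nonneg_iff.mp hk0
    exact ⟨k, by exact_mod_cast hk, rfl⟩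
  · rintro ⟨k, hk, rfl⟩
    have hk' : (k : ℝ) < 2 * n := by exact_mod_cast hk
    refine ⟨⟨by positivity, ?_⟩, k, by push_cast; rfl⟩
    rw [div_lt_iff₀ hn', mul_right_comm]
    exact mul_lt_mul_of_pos_right hk' pi_pos

theorem Real.ncard_setOf_sin_nat_mul_eq_zero_Ico {n : ℕ} (hn : 0 < n) :
    {x : ℝ | x ∈ Set.Ico 0 (2 * π) ∧ sin (n * x) = 0}.ncard = 2 * n := by
  rw [setOf_sin_nat_mul_eq_zero_Ico hn, Set.ncard_coe_finset, Finset.card_image_of_injective,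
    Finset.card_range]
  intro a b hab
  have hn' : (n : ℝ) ≠ 0 := by positivity
  simpa only [div_left_inj' hn', mul_left_inj' pi_ne_zero, Nat.cast_inj] using hab

theorem cubic_hyperbolic_directions (lam mu tau : ℝ) (hne : tau ≠ lam + 2*mu) :
    (∀ phi : ℝ,
      ((![-Real.sin phi, Real.cos phi] ⬝ᵥ
        (!![(tau-mu)*(Real.cos phi)^2 + mu, (lam+mu)*(Real.cos phi)*(Real.sin phi);
            (lam+mu)*(Real.cos phi)*(Real.sin phi), (tau-mu)*(Real.sin phi)^2 + mu]
          : Matrix (Fin 2) (Fin 2) ℝ).mulVec ![Real.cos phi, Real.sin phi]) = 0)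
      ↔ Real.sin (4*phi) = 0) ∧
    (∀ phi : ℝ, Real.sin (4*phi) = 0 ↔ ∃ k : ℤ, phi = k * π / 4) ∧
    ({phi : ℝ | phi ∈ Set.Ico 0 (2*π) ∧ Real.sin (4*phi) = 0}.ncard = 8) := by
  refine ⟨fun phi => ?_, sin_mul_eq_zero_iff four_ne_zero, ?_⟩
  · have hcoeff : lam + 2 * mu - tau ≠ 0 := sub_ne_zero.mpr hne.symm
    rw [← cubicMediumMatrix, perp_dotProduct_cubicMediumMatrix_mulVec, sin_four_mul,
      mul_eq_zero_iff_left hcoeff, mul_eq_zero_iff_left four_ne_zero]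
  · simpa using ncard_setOf_sin_nat_mul_eq_zero_Ico (n := 4) (by norm_num)
end

section
/- For a rhombic medium with hyperbolic direction η = (cos φ, sin φ) (i.e. η and η^⊥ are eigenvectors of A(η)), the eigenvalue of A(η) for the eigenvector η is (τ₁-2μ-λ)cos²φ + λ + 2μ and the eigenvalue for η^⊥ is (τ₁-2μ-λ)cos²φ + μ whenever sin φ ≠ 0 and (τ₁-τ₂) + (τ₁+τ₂-2λ-4μ)cos 2φ = 0; in particular the difference of the two eigenvalues is λ + μ. -/
/-!
Writing `η = (c, s)` with `c² + s² = 1`, the first component of `A(η) η` is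
`((τ₁-2μ-λ)c² + λ+2μ) c` identically, while the second component has the same factor exactly when
`(τ₁+τ₂-2λ-4μ)c² = τ₂-λ-2μ`, which is the hyperbolicity condition rewritten with
`cos 2φ = 2c² - 1`. Since `A(η)` is symmetric, `η^⊥` is then an eigenvector for the eigenvalue
`tr A(η)` minus the first one.
-/

open Matrix

theorem Matrix.IsSymm.mulVec_perp_fin_two {R : Type*} [CommRing R]
    {A : Matrix (Fin 2) (Fin 2) R} (hA : A.IsSymm) {x y e : R}
    (h : A *ᵥ ![x, y] = e • ![x, y]) :
    A *ᵥ ![-y, x] = (A.trace - e) • ![-y, x] := by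
  have h₀ : A 0 0 * x + A 0 1 * y = e * x := by simpa using congrFun h 0
  have h₁ : A 1 0 * x + A 1 1 * y = e * y := by simpa using congrFun h 1
  have hsymm : A 1 0 = A 0 1 := hA.apply 0 1
  rw [mulVec_fin_two, smul_vec2, trace_fin_two]
  simp only [cons_val_zero, cons_val_one, cons_val_fin_one, smul_eq_mul]
  exact vec2_eq (by linear_combination h₁ - x * hsymm) (by linear_combination -h₀ - y * hsymm)

/-- `A(η)` for `η = (c, s)`. -/
def rhombicSymbol (lam mu tau1 tau2 c s : ℝ) : Matrix (Fin 2) (Fin 2) ℝ :=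
  !![(tau1 - mu) * c ^ 2 + mu, (lam + mu) * c * s;
     (lam + mu) * c * s, (tau2 - mu) * s ^ 2 + mu]

section Rhombic

variable (lam mu tau1 tau2 : ℝ) {c s : ℝ}

theorem rhombicSymbol_isSymm (c s : ℝ) : (rhombicSymbol lam mu tau1 tau2 c s).IsSymm := by
  ext i j
  fin_cases i <;> fin_cases j <;> rfl

theorem rhombicSymbol_trace (c s : ℝ) :
    (rhombicSymbol lam mu tau1 tau2 c s).trace
      = (tau1 - mu) * c ^ 2 + (tau2 - mu) * s ^ 2 + 2 * mu := by
  rw [rhombicSymbol, trace_fin_two_of]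
  ring

theorem cos_sq_of_hyperbolic {phi : ℝ}
    (h : (tau1 - tau2) + (tau1 + tau2 - 2 * lam - 4 * mu) * Real.cos (2 * phi) = 0) :
    (tau1 + tau2 - 2 * lam - 4 * mu) * Real.cos phi ^ 2 = tau2 - lam - 2 * mu := by
  rw [Real.cos_two_mul] at h
  linarith

variable (hunit : s ^ 2 + c ^ 2 = 1)
  (hyp : (tau1 + tau2 - 2 * lam - 4 * mu) * c ^ 2 = tau2 - lam - 2 * mu)
include hunit hyp

theorem rhombicSymbol_mulVec_dir :
    rhombicSymbol lam mu tau1 tau2 c s *ᵥ ![c, s]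
      = ((tau1 - 2 * mu - lam) * c ^ 2 + lam + 2 * mu) • ![c, s] := by
  rw [rhombicSymbol, mulVec_fin_two, smul_vec2]
  simp only [of_apply, cons_val_zero, cons_val_one, cons_val_fin_one, smul_eq_mul]
  exact vec2_eq (by linear_combination (lam + mu) * c * hunit)
    (by linear_combination (tau2 - mu) * s * hunit - s * hyp)

theorem rhombicSymbol_mulVec_perp :
    rhombicSymbol lam mu tau1 tau2 c s *ᵥ ![-s, c]
      = ((tau1 - 2 * mu - lam) * c ^ 2 + mu) • ![-s, c] := by
  rw [(rhombicSymbol_isSymm lam mu tau1 tau2 c s).mulVec_perp_fin_two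
    (rhombicSymbol_mulVec_dir lam mu tau1 tau2 hunit hyp), rhombicSymbol_trace]
  congr 1
  linear_combination (tau2 - mu) * hunit - hyp

end Rhombic

theorem rhombic_eigenvalues_general (lam mu tau1 tau2 phi : ℝ)
    (hcond : (tau1-tau2) + (tau1+tau2-2*lam-4*mu)*Real.cos (2*phi) = 0)
    (A : Matrix (Fin 2) (Fin 2) ℝ)
    (hA : A = !![(tau1-mu)*(Real.cos phi)^2 + mu, (lam+mu)*(Real.cos phi)*(Real.sin phi);
                 (lam+mu)*(Real.cos phi)*(Real.sin phi), (tau2-mu)*(Real.sin phi)^2 + mu]) :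
    A.mulVec ![Real.cos phi, Real.sin phi]
      = ((tau1-2*mu-lam)*(Real.cos phi)^2 + lam + 2*mu) • ![Real.cos phi, Real.sin phi] ∧
    A.mulVec ![-Real.sin phi, Real.cos phi]
      = ((tau1-2*mu-lam)*(Real.cos phi)^2 + mu) • ![-Real.sin phi, Real.cos phi] ∧
    ((tau1-2*mu-lam)*(Real.cos phi)^2 + lam + 2*mu)
      - ((tau1-2*mu-lam)*(Real.cos phi)^2 + mu) = lam + mu := by
  have hunit := Real.sin_sq_add_cos_sq phi
  have hyp := cos_sq_of_hyperbolic lam mu tau1 tau2 hcond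
  subst hA
  exact ⟨rhombicSymbol_mulVec_dir lam mu tau1 tau2 hunit hyp,
    rhombicSymbol_mulVec_perp lam mu tau1 tau2 hunit hyp, by ring⟩

theorem rhombic_eigenvalues (lam mu tau1 tau2 phi : ℝ)
    (hs : Real.sin phi ≠ 0)
    (hcond : (tau1-tau2) + (tau1+tau2-2*lam-4*mu)*Real.cos (2*phi) = 0)
    (A : Matrix (Fin 2) (Fin 2) ℝ)
    (hA : A = !![(tau1-mu)*(Real.cos phi)^2 + mu, (lam+mu)*(Real.cos phi)*(Real.sin phi);
                 (lam+mu)*(Real.cos phi)*(Real.sin phi), (tau2-mu)*(Real.sin phi)^2 + mu]) :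
    A.mulVec ![Real.cos phi, Real.sin phi]
      = ((tau1-2*mu-lam)*(Real.cos phi)^2 + lam + 2*mu) • ![Real.cos phi, Real.sin phi] ∧
    A.mulVec ![-Real.sin phi, Real.cos phi]
      = ((tau1-2*mu-lam)*(Real.cos phi)^2 + mu) • ![-Real.sin phi, Real.cos phi] ∧
    ((tau1-2*mu-lam)*(Real.cos phi)^2 + lam + 2*mu)
      - ((tau1-2*mu-lam)*(Real.cos phi)^2 + mu) = lam + mu :=
  rhombic_eigenvalues_general lam mu tau1 tau2 phi hcond A hA
end

section
/- For the rhombic medium with τ₁ = λ+2μ, the smallest eigenvalue κ₁(φ) of A((cos φ, sin φ)) satisfies κ₁(φ) = μ + (τ₂ - λ - 2μ)φ² + O(φ³) as φ → 0, provided λ + μ > 0 and μ < λ + 2μ is the eigenvalue branch through μ at φ=0. -/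
/-!
The eigenvalue equation `det (A φ - κ φ • 1) = 0` says `(κ - a)(κ - d) = b²` with `a, b, d` the
entries of `A φ`. Subtracting the same expression at the candidate `g φ = μ + (τ₂ - λ - 2μ) φ²`
factors as `(κ - g)(κ + g - a - d)`, and the second factor tends to `-(λ + μ) ≠ 0`, so `κ - g` is
of the order of the residual `b² - (g - a)(g - d)`. Writing `sin² φ = φ² + O(φ⁴)`, that residual is
`(λ + μ)(τ₂ - λ - 2μ) φ⁴ + O(φ⁴)`.
-/

open Matrix Asymptotics Filter Topology Real

theorem Matrix.det_sub_smul_one_fin_two {R : Type*} [CommRing R] (M : Matrix (Fin 2) (Fin 2) R)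
    (k : R) : (M - k • (1 : Matrix (Fin 2) (Fin 2) R)).det =
      (k - M 0 0) * (k - M 1 1) - M 0 1 * M 1 0 := by
  simp only [det_fin_two, sub_apply, smul_apply, one_apply_eq, one_apply_ne, ne_eq, zero_ne_one,
    one_ne_zero, not_false_eq_true, smul_eq_mul, mul_one, mul_zero, sub_zero]
  ring

theorem Asymptotics.isBigO_sub_of_quadratic_root {α : Type*} {l : Filter α}
    {κ g a d c : α → ℝ} {D₀ : ℝ} (hκ : ∀ x, (κ x - a x) * (κ x - d x) = c x)
    (hD : Tendsto (fun x => κ x + g x - a x - d x) l (𝓝 D₀)) (hD₀ : D₀ ≠ 0) :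
    (fun x => κ x - g x) =O[l] fun x => c x - (g x - a x) * (g x - d x) := by
  have hfactor : ∀ x, (κ x - g x) * (κ x + g x - a x - d x) =
      c x - (g x - a x) * (g x - d x) := fun x => by linear_combination hκ x
  have hquot : (fun x => κ x - g x) =ᶠ[l]
      fun x => (c x - (g x - a x) * (g x - d x)) * (κ x + g x - a x - d x)⁻¹ := by
    filter_upwards [hD.eventually_ne hD₀] with x hx
    rw [← hfactor, mul_inv_cancel_right₀ hx]
  simpa only [mul_one] using
    ((isBigO_refl _ l).mul ((hD.inv₀ hD₀).isBigO_one ℝ)).congr' hquot.symm EventuallyEq.rfl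

theorem Real.sin_sq_sub_sq_isBigO : (fun x => sin x ^ 2 - x ^ 2) =O[𝓝 0] fun x => x ^ 4 := by
  refine IsBigO.of_bound (5 / 12) ?_
  filter_upwards [Metric.closedBall_mem_nhds (0 : ℝ) (by norm_num : (0 : ℝ) < 1 / 2)] with x hx
  rw [Metric.mem_closedBall, dist_zero_right, norm_eq_abs] at hx
  have h2x : |2 * x| ≤ 1 := by rw [abs_mul, abs_two]; linarith
  have hsq : sin x ^ 2 - x ^ 2 = -(cos (2 * x) - (1 - (2 * x) ^ 2 / 2)) / 2 := by
    rw [sin_sq, cos_sq]; ring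
  rw [norm_eq_abs, norm_eq_abs, hsq, abs_div, abs_neg, abs_two, abs_pow]
  have hbound := cos_bound h2x
  rw [abs_mul, abs_two] at hbound
  linarith

theorem rhombic_residual_isBigO (lam mu tau2 : ℝ) :
    (fun x => ((lam + mu) * cos x * sin x) ^ 2 -
      (mu + (tau2 - lam - 2 * mu) * x ^ 2 - ((lam + mu) * cos x ^ 2 + mu)) *
      (mu + (tau2 - lam - 2 * mu) * x ^ 2 - ((tau2 - mu) * sin x ^ 2 + mu)))
      =O[𝓝 0] fun x => x ^ 4 := by
  set K := tau2 - lam - 2 * mu with hK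
  set Q : ℝ → ℝ := fun x => (lam + mu) * K * (sin x ^ 2 + x ^ 2 - 1) + K ^ 2 * x ^ 2
  -- on the diagonal `sin² x = x²` the residual is exactly `(λ + μ) K x⁴`
  have hsplit : ∀ x, ((lam + mu) * cos x * sin x) ^ 2 -
      (mu + K * x ^ 2 - ((lam + mu) * cos x ^ 2 + mu)) *
      (mu + K * x ^ 2 - ((tau2 - mu) * sin x ^ 2 + mu)) =
      (lam + mu) * K * x ^ 4 + (sin x ^ 2 - x ^ 2) * Q x := fun x => by
    simp only [Q, hK]
    linear_combination (lam + mu) * ((lam + mu) * sin x ^ 2 + K * x ^ 2 - (tau2 - mu) * sin x ^ 2) *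
      sin_sq_add_cos_sq x
  simp only [hsplit]
  have hQ : Q =O[𝓝 0] fun _ => (1 : ℝ) :=
    ((by fun_prop : Continuous Q).tendsto 0).isBigO_one ℝ
  refine ((isBigO_refl _ _).const_mul_left _).add ?_
  simpa only [mul_one] using sin_sq_sub_sq_isBigO.mul hQ

theorem rhombic_eigenvalue_expansion_general (lam mu tau2 : ℝ) (hlm : lam + mu > 0)
    (A : ℝ → Matrix (Fin 2) (Fin 2) ℝ)
    (hA : ∀ phi, A phi =
      !![(lam+mu)*(Real.cos phi)^2 + mu, (lam+mu)*(Real.cos phi)*(Real.sin phi);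
         (lam+mu)*(Real.cos phi)*(Real.sin phi), (tau2-mu)*(Real.sin phi)^2 + mu])
    (kappa : ℝ → ℝ) (hcont : Continuous kappa) (hk0 : kappa 0 = mu)
    (heig : ∀ phi, (A phi - kappa phi • (1 : Matrix (Fin 2) (Fin 2) ℝ)).det = 0) :
    (fun phi => kappa phi - (mu + (tau2 - lam - 2*mu)*phi^2)) =O[nhds 0]
      (fun phi => phi^3) := by
  have hchar : ∀ phi, (kappa phi - ((lam + mu) * cos phi ^ 2 + mu)) *
      (kappa phi - ((tau2 - mu) * sin phi ^ 2 + mu)) = ((lam + mu) * cos phi * sin phi) ^ 2 :=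
    fun phi => by
      have h := heig phi
      rw [det_sub_smul_one_fin_two, hA phi] at h
      simp only [of_apply, cons_val', cons_val_zero, cons_val_one, empty_val',
        cons_val_fin_one] at h
      linear_combination h
  have hsum : Tendsto (fun phi => kappa phi + (mu + (tau2 - lam - 2 * mu) * phi ^ 2) -
      ((lam + mu) * cos phi ^ 2 + mu) - ((tau2 - mu) * sin phi ^ 2 + mu)) (𝓝 0)
      (𝓝 (-(lam + mu))) :=
    (by fun_prop : Continuous _).tendsto' 0 _ (by simp [hk0]; ring)
  exact (isBigO_sub_of_quadratic_root hchar hsum (neg_ne_zero.2 hlm.ne')).trans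
    ((rhombic_residual_isBigO lam mu tau2).trans (isLittleO_pow_pow (by norm_num)).isBigO)

theorem rhombic_eigenvalue_expansion (lam mu tau2 : ℝ) (hmu : mu > 0) (hlm : lam + mu > 0)
    (A : ℝ → Matrix (Fin 2) (Fin 2) ℝ)
    (hA : ∀ phi, A phi =
      !![(lam+mu)*(Real.cos phi)^2 + mu, (lam+mu)*(Real.cos phi)*(Real.sin phi);
         (lam+mu)*(Real.cos phi)*(Real.sin phi), (tau2-mu)*(Real.sin phi)^2 + mu])
    (kappa : ℝ → ℝ) (hcont : Continuous kappa) (hk0 : kappa 0 = mu)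
    (heig : ∀ phi, (A phi - kappa phi • (1 : Matrix (Fin 2) (Fin 2) ℝ)).det = 0) :
    (fun phi => kappa phi - (mu + (tau2 - lam - 2*mu)*phi^2)) =O[nhds 0]
      (fun phi => phi^3) :=
  rhombic_eigenvalue_expansion_general lam mu tau2 hlm A hA kappa hcont hk0 heig
end

section
/- For the exceptional medium, the determinant of A((cos φ, sin φ)) equals (μ/8)(13μ + 8λ + 4μ cos 2φ - μ cos 4φ + 8μ sin 2φ + 4(λ+μ) sin 4φ); in particular, if λ > μ > 0 then det A(η) > 0 for all φ. -/
open Matrix Real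

noncomputable def exceptionalMatrix (lam mu phi : ℝ) : Matrix (Fin 2) (Fin 2) ℝ :=
  !![(lam+mu)*(cos phi)^2 + mu,
      (lam+mu)*(cos phi)*(sin phi) + mu*(sin phi)^2;
      (lam+mu)*(cos phi)*(sin phi) + mu*(sin phi)^2,
      (lam+mu)*(sin phi)^2 + mu + 2*mu*(cos phi)*(sin phi)]

/-- In terms of `c = cos φ`, `s = sin φ` the determinant is
`μ ((λ+μ)(c² + s²) + μ + 2(λ+μ) c s (c² - s²) + 2μ c s) - μ² s⁴`; the double-angle formulas turn
`2 c s (c² - s²)` into `sin 4φ / 2` and `s⁴` into `(3 - 4 cos 2φ + cos 4φ) / 8`. -/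
theorem det_exceptionalMatrix (lam mu phi : ℝ) :
    (exceptionalMatrix lam mu phi).det
      = (mu/8)*(13*mu + 8*lam + 4*mu*cos (2*phi) - mu*cos (4*phi)
          + 8*mu*sin (2*phi) + 4*(lam+mu)*sin (4*phi)) := by
  have h4 : (4:ℝ)*phi = 2*(2*phi) := by ring
  rw [exceptionalMatrix, det_fin_two_of, h4]
  simp only [cos_two_mul, sin_two_mul]
  linear_combination (mu^2*cos phi^2 - 2*mu^2*sin phi*cos phi - mu^2*sin phi^2 + lam*mu
    - 2*lam*mu*sin phi*cos phi) * sin_sq_add_cos_sq phi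

theorem four_mul_sub_le_exceptional_trig {lam mu : ℝ} (hmu : 0 ≤ mu) (hlm : 0 ≤ lam + mu)
    (a b : ℝ) :
    4*(lam - mu) ≤ 13*mu + 8*lam + 4*mu*cos a - mu*cos b + 8*mu*sin a + 4*(lam+mu)*sin b := by
  have hcos_a := mul_le_mul_of_nonneg_left (neg_one_le_cos a) hmu
  have hcos_b := mul_le_mul_of_nonneg_left (cos_le_one b) hmu
  have hsin_a := mul_le_mul_of_nonneg_left (neg_one_le_sin a) hmu
  have hsin_b := mul_le_mul_of_nonneg_left (neg_one_le_sin b) hlm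
  linarith

theorem exceptional_det (lam mu : ℝ) :
    (∀ phi : ℝ,
      (!![(lam+mu)*(Real.cos phi)^2 + mu,
          (lam+mu)*(Real.cos phi)*(Real.sin phi) + mu*(Real.sin phi)^2;
          (lam+mu)*(Real.cos phi)*(Real.sin phi) + mu*(Real.sin phi)^2,
          (lam+mu)*(Real.sin phi)^2 + mu + 2*mu*(Real.cos phi)*(Real.sin phi)]
        : Matrix (Fin 2) (Fin 2) ℝ).det
      = (mu/8)*(13*mu + 8*lam + 4*mu*Real.cos (2*phi) - mu*Real.cos (4*phi)
          + 8*mu*Real.sin (2*phi) + 4*(lam+mu)*Real.sin (4*phi))) ∧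
    (lam > mu → mu > 0 → ∀ phi : ℝ,
      0 < (mu/8)*(13*mu + 8*lam + 4*mu*Real.cos (2*phi) - mu*Real.cos (4*phi)
          + 8*mu*Real.sin (2*phi) + 4*(lam+mu)*Real.sin (4*phi))) := by
  refine ⟨det_exceptionalMatrix lam mu, fun hlm hmu phi => mul_pos (by positivity) ?_⟩
  have := four_mul_sub_le_exceptional_trig hmu.le (by linarith) (2*phi) (4*phi)
  linarith
end

section
/- For the exceptional medium with λ + μ > 0, the matrix A(η) has a repeated eigenvalue for some unit vector η if and only if λ = (√3 - 1)μ. -/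
open Matrix

/-- With `k = λ + μ`: the off-diagonal entry factors as `η₂ (k η₁ + μ η₂)`, and `η₂ = 0` would
force `k = 0`; substituting `k η₁ = -μ η₂` into `k (A₁₁ - A₂₂) = 0` leaves `(k² - 3μ²) η₂² = 0`. -/
theorem sq_eq_three_mul_sq_of_scalar_symbol {k mu e1 e2 : ℝ} (hk : k ≠ 0)
    (hunit : e1 ^ 2 + e2 ^ 2 = 1) (hoff : k * e1 * e2 + mu * e2 ^ 2 = 0)
    (hdiag : k * e1 ^ 2 + mu = k * e2 ^ 2 + mu + 2 * mu * e1 * e2) : k ^ 2 = 3 * mu ^ 2 := by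
  have he2 : e2 ≠ 0 := by
    rintro rfl
    exact hk (by linear_combination hdiag - k * hunit)
  have hrel : k * e1 = -mu * e2 :=
    mul_left_cancel₀ he2 (by linear_combination hoff)
  have : (k ^ 2 - 3 * mu ^ 2) * e2 ^ 2 = 0 := by
    linear_combination -k * hdiag + (k * e1 - 3 * mu * e2) * hrel
  linear_combination (mul_eq_zero.mp this).resolve_right (pow_ne_zero 2 he2)

theorem eq_sqrt_three_mul_of_sq_eq {k mu : ℝ} (hk : 0 ≤ k) (hmu : 0 ≤ mu)
    (h : k ^ 2 = 3 * mu ^ 2) : k = Real.sqrt 3 * mu :=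
  (pow_left_inj₀ hk (by positivity) two_ne_zero).1 <| by
    rw [h, mul_pow, Real.sq_sqrt zero_le_three]

theorem exceptional_repeated_eigenvalue (lam mu : ℝ) (hmu : 0 < mu) (hlm : lam + mu > 0) :
    (∃ eta1 eta2 : ℝ, eta1^2 + eta2^2 = 1 ∧ ∃ c : ℝ,
      (!![(lam+mu)*eta1^2 + mu, (lam+mu)*eta1*eta2 + mu*eta2^2;
          (lam+mu)*eta1*eta2 + mu*eta2^2, (lam+mu)*eta2^2 + mu + 2*mu*eta1*eta2]
        : Matrix (Fin 2) (Fin 2) ℝ) = c • (1 : Matrix (Fin 2) (Fin 2) ℝ))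
    ↔ lam = (Real.sqrt 3 - 1)*mu := by
  simp only [Matrix.exists_eq_smul_one_fin_two_iff]
  have hs : Real.sqrt 3 ^ 2 = 3 := Real.sq_sqrt zero_le_three
  constructor
  · rintro ⟨e1, e2, hunit, hoff, -, hdiag⟩
    have hsq := sq_eq_three_mul_sq_of_scalar_symbol hlm.ne' hunit hoff hdiag
    linarith [eq_sqrt_three_mul_of_sq_eq hlm.le hmu.le hsq]
  · intro hlam
    have hk : lam + mu = Real.sqrt 3 * mu := by linarith
    refine ⟨-1 / 2, Real.sqrt 3 / 2, by linear_combination hs / 4, ?_, ?_, ?_⟩ <;> rw [hk]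
    · ring
    · ring
    · linear_combination -(Real.sqrt 3 * mu / 4) * hs
end
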